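/- Let R be a finite ring with unity, let χ be an additive character of R, let x ∈ R, and let K be the largest left ideal of R contained in (x)_ℓ ∩ {y ∈ R : χ(y) = 1}. Then C_χ(x) = Σ_{E ⊆ M_R((x)_ℓ) with ⋂_{M∈E} M ⊆ K} (−1)^{|E|} · |⋂_{M∈E} M|, where the intersection over the empty subset E = ∅ is taken to be (x)_ℓ. -/

import Mathlib

open scoped BigOperators
open Classical

variable {R : Type*}

/-- The left ideal of `R` generated by `x`, i.e. `(x)_ℓ`. -/
def lgen [Ring R] (x : R) : Submodule R R := Submodule.span R {x}

/-- `[x]_ℓ = {y : (y)_ℓ = (x)_ℓ}`. -/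
def classL [Ring R] (x : R) : Set R := {y | lgen y = lgen x}

/-- The character sum `C_χ(x) = ∑_{s ∈ [x]_ℓ} χ(s)`. -/
noncomputable def CchiL [Ring R] (χ : AddChar R ℂ) (x : R) : ℂ :=
  ∑ᶠ s ∈ classL x, χ s

/-- The set `M_R(J)` of maximal `R`-left ideals of `J`. -/
def maxROf [Ring R] (J : Submodule R R) : Set (Submodule R R) :=
  {M | M < J ∧ ∀ I' : Submodule R R, M < I' → ¬ I' < J}

/-- The set `M_R(J, K)` of maximal `R`-left ideals of `J` containing `K`. -/
def maxROfAbove [Ring R] (J K : Submodule R R) : Set (Submodule R R) :=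
  {M | M ∈ maxROf J ∧ K ≤ M}

/-- Intersection of the family `E` of left ideals, with the convention that the
empty intersection is `J`. -/
noncomputable def interIn [Ring R] (J : Submodule R R) (E : Set (Submodule R R)) :
    Submodule R R :=
  if E = ∅ then J else sInf E

/-- The Möbius function `μ_R(I, J)` on left ideals of `R`. -/
noncomputable def muR [Ring R] (I J : Submodule R R) : ℤ :=
  if I = J then 1
  else if I < J ∧ ∃ E : Set (Submodule R R),
      E ⊆ maxROf J ∧ E.Nonempty ∧ interIn J E = I then
    (Nat.card {E : Set (Submodule R R) //
        E ⊆ maxROf J ∧ interIn J E = I ∧ Even (Nat.card E)} : ℤ)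
      - (Nat.card {E : Set (Submodule R R) //
        E ⊆ maxROf J ∧ interIn J E = I ∧ Odd (Nat.card E)} : ℤ)
  else 0

/-- The function `φ_R(I, J)` on left ideals of `R`. -/
noncomputable def phiR [Ring R] (I J : Submodule R R) : ℂ :=
  if I = J then 1
  else if I < J ∧ ∃ E : Set (Submodule R R),
      E ⊆ maxROf J ∧ E.Nonempty ∧ interIn J E = I then
    ∏ᶠ M ∈ maxROfAbove J I, ((Nat.card J : ℂ) / (Nat.card M : ℂ) - 1)
  else 1


/-! An element `y` generates `(x)_ℓ` iff `y ∈ (x)_ℓ` and `y` lies in no maximal `R`-left ideal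
of `(x)_ℓ` (these exist above every proper subideal, `R` being noetherian). Inclusion–exclusion
over `M_R((x)_ℓ)` therefore writes `C_χ(x)` as the alternating sum of the character sums over
the ideals `⋂ E`, and the character sum over a left ideal `I ≤ (x)_ℓ` is `|I|` when `χ` is
trivial on `I`, i.e. when `I ≤ K`, and `0` otherwise. -/
lemma AddChar.sum_addSubgroup_eq_ite {A S σ : Type*} [AddGroup A] [SetLike σ A]
    [AddSubgroupClass σ A] [CommRing S] [IsDomain S] (ψ : AddChar A S) (H : σ)
    [Fintype (H : Set A)] :
    ∑ a ∈ (H : Set A).toFinset, ψ a =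
      if ∀ a ∈ H, ψ a = 1 then (Nat.card H : S) else 0 := by
  rw [← Finset.sum_set_coe, Nat.card_eq_fintype_card]
  convert (ψ.compAddMonoidHom (AddSubgroupClass.subtype H)).sum_eq_ite using 2
  · rfl
  · rw [AddChar.eq_zero_iff, Subtype.forall]
    rfl

lemma Set.Finite.finsum_mem_subsets_eq_sum_powerset {α M : Type*} [AddCommMonoid M] {s : Set α}
    (hs : s.Finite) (p : Set α → Prop) (g : Set α → M) :
    ∑ᶠ E ∈ {E | E ⊆ s ∧ p E}, g E =
      ∑ t ∈ hs.toFinset.powerset.filter (fun t : Finset α ↦ p t), g t := by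
  have hset : {E | E ⊆ s ∧ p E} =
      ((hs.toFinset.powerset.filter fun t : Finset α ↦ p t).image
        fun t : Finset α ↦ (t : Set α)) := by
    ext E
    simp only [Set.mem_ofPred_eq, Finset.coe_image, Finset.coe_filter, Finset.mem_powerset,
      Set.mem_image]
    constructor
    · rintro ⟨hE, hp⟩
      exact ⟨(hs.subset hE).toFinset, ⟨by simpa using hE, by simpa using hp⟩, by simp⟩
    · rintro ⟨t, ⟨ht, hp⟩, rfl⟩
      exact ⟨by simpa using ht, hp⟩
  rw [hset, finsum_mem_coe_finset, Finset.sum_image fun _ _ _ _ h ↦ Finset.coe_injective h]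

section Ring

variable [Ring R]

lemma mem_maxROf_iff {J M : Submodule R R} : M ∈ maxROf J ↔ M ⋖ J := Iff.rfl

lemma interIn_eq_inf_sInf {J : Submodule R R} {E : Set (Submodule R R)} (hE : E ⊆ maxROf J) :
    interIn J E = J ⊓ sInf E := by
  unfold interIn
  split_ifs with h
  · simp [h]
  · obtain ⟨M, hM⟩ := Set.nonempty_iff_ne_empty.2 h
    exact (inf_eq_right.2 ((sInf_le hM).trans (hE hM).1.le)).symm

lemma mem_interIn_iff {J : Submodule R R} {E : Set (Submodule R R)} (hE : E ⊆ maxROf J)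
    {a : R} :
    a ∈ interIn J E ↔ a ∈ J ∧ ∀ M ∈ E, a ∈ M := by
  rw [interIn_eq_inf_sInf hE, Submodule.mem_inf, Submodule.mem_sInf]

lemma interIn_le {J : Submodule R R} {E : Set (Submodule R R)} (hE : E ⊆ maxROf J) :
    interIn J E ≤ J :=
  (interIn_eq_inf_sInf hE).trans_le inf_le_left

lemma le_iff_forall_addChar_eq_one {S : Type*} [Monoid S] {χ : AddChar R S}
    {J K I : Submodule R R} (hK : (K : Set R) ⊆ (J : Set R) ∩ {y | χ y = 1})
    (hKmax : ∀ L : Submodule R R, (L : Set R) ⊆ (J : Set R) ∩ {y | χ y = 1} → L ≤ K)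
    (hI : I ≤ J) : I ≤ K ↔ ∀ a ∈ I, χ a = 1 :=
  ⟨fun h _ ha ↦ (hK (h ha)).2, fun h ↦ hKmax I fun a ha ↦ ⟨hI ha, h a ha⟩⟩

lemma mem_classL_iff [IsNoetherianRing R] {x y : R} :
    y ∈ classL x ↔ y ∈ lgen x ∧ ∀ M ∈ maxROf (lgen x), y ∉ M := by
  have hy : y ∈ lgen y := Submodule.mem_span_singleton_self y
  constructor
  · intro (h : lgen y = lgen x)
    refine ⟨h ▸ hy, fun M hM hyM ↦ (hM.1.trans_le' ?_).false⟩
    exact h ▸ Submodule.span_le.2 (Set.singleton_subset_iff.2 hyM)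
  · rintro ⟨hyx, hnot⟩
    have hle : lgen y ≤ lgen x := Submodule.span_le.2 (Set.singleton_subset_iff.2 hyx)
    by_contra hne
    obtain ⟨M, hyM, hM⟩ := exists_le_covBy_of_lt (lt_of_le_of_ne hle hne)
    exact hnot M (mem_maxROf_iff.2 hM) (hyM hy)

end Ring

section Finite

variable [Ring R] [Fintype R]

open Finset in
lemma sum_classL_eq_sum_powerset {M : Type*} [AddCommGroup M] (f : R → M) (x : R) :
    ∑ a ∈ (classL x).toFinset, f a =
      ∑ t ∈ (Set.toFinite (maxROf (lgen x))).toFinset.powerset,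
        (-1 : ℤ) ^ #t • ∑ a ∈ (interIn (lgen x) t : Set R).toFinset, f a := by
  set 𝓜 := (Set.toFinite (maxROf (lgen x))).toFinset
  have hclass : (classL x).toFinset =
      𝓜.inf (fun M ↦ (M : Set R).toFinsetᶜ) ∩ (lgen x : Set R).toFinset := by
    ext a
    simp [mem_classL_iff, Finset.mem_inf, 𝓜, and_comm]
  have hinter : ∀ t ∈ 𝓜.powerset, (interIn (lgen x) t : Set R).toFinset =
      t.inf (fun M ↦ (M : Set R).toFinset) ∩ (lgen x : Set R).toFinset := by
    intro t ht
    ext a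
    simp [mem_interIn_iff (fun M hM ↦ by simpa [𝓜] using mem_powerset.1 ht hM),
      Finset.mem_inf, and_comm]
  rw [hclass, ← sum_ite_mem, inclusion_exclusion_sum_inf_compl]
  refine sum_congr rfl fun t ht ↦ ?_
  rw [hinter t ht, sum_ite_mem]

end Finite

theorem stmt5 [Ring R] [Fintype R] (χ : AddChar R ℂ) (x : R) (K : Submodule R R)
    (hK : (K : Set R) ⊆ (lgen x : Set R) ∩ {y | χ y = 1})
    (hKmax : ∀ L : Submodule R R,
      (L : Set R) ⊆ (lgen x : Set R) ∩ {y | χ y = 1} → L ≤ K) :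
    CchiL χ x =
      ∑ᶠ E ∈ {E : Set (Submodule R R) |
          E ⊆ maxROf (lgen x) ∧ interIn (lgen x) E ≤ K},
        ((-1 : ℂ) ^ (Nat.card E) * (Nat.card (interIn (lgen x) E) : ℂ)) := by
  have hmax := Set.toFinite (maxROf (lgen x))
  rw [CchiL, finsum_mem_eq_toFinset_sum, sum_classL_eq_sum_powerset,
    hmax.finsum_mem_subsets_eq_sum_powerset, Finset.sum_filter]
  refine Finset.sum_congr rfl fun t ht ↦ ?_
  have hsub : (t : Set (Submodule R R)) ⊆ maxROf (lgen x) := by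
    simpa using Finset.mem_powerset.1 ht
  rw [χ.sum_addSubgroup_eq_ite (interIn (lgen x) t)]
  simp only [← le_iff_forall_addChar_eq_one hK hKmax (interIn_le hsub)]
  split_ifs <;> simp
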